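/- arXiv:2210.08370 — 5 statements merged into one kernel-verified Lean document; each statement's English description precedes it below -/
import Mathlib

section
/- If G is a graph on n vertices such that every set of k vertices contains a clique on t vertices, and S is an independent set in G, then the induced subgraph G - S has the property that every set of k - |S| vertices contains a clique on t - 1 vertices. -/
/-! Given `k - |S|` vertices of `G - S`, add `S` back to get `k` vertices of `G`. These contain a
`t`-clique, which meets the independent set `S` in at most one vertex, so at least `t - 1` of its
vertices lie in the chosen set. -/

open SimpleGraph

def CliqueInEveryK {V : Type*} [DecidableEq V] (G : SimpleGraph V) (k t : ℕ) : Prop :=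
  ∀ s : Finset V, s.card = k → ∃ c ⊆ s, G.IsNClique t c

namespace SimpleGraph

variable {V : Type*} {G : SimpleGraph V}

theorem IsClique.subsingleton_inter_of_isIndepSet {c S : Set V} (hc : G.IsClique c)
    (hS : G.IsIndepSet S) : (c ∩ S).Subsingleton := by
  intro u hu v hv
  by_contra hne
  exact hS hu.2 hv.2 hne (hc hu.1 hv.1 hne)

theorem IsNClique.exists_induce_isNClique_subset {A : Set V} {m : ℕ} {s : Finset A}
    {d : Finset V} (hd : d ⊆ s.map (.subtype _)) (h : G.IsNClique m d) :
    ∃ c ⊆ s, (G.induce A).IsNClique m c := by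
  obtain ⟨c, hcs, rfl⟩ := Finset.subset_map_iff.mp hd
  exact ⟨c, hcs, (isNClique_induce_iff A c m).mpr h⟩

variable [DecidableEq V]

theorem IsNClique.exists_isNClique_pred_subset_sdiff {t : ℕ} {c S : Finset V}
    (hc : G.IsNClique t c) (hS : G.IsIndepSet (S : Set V)) :
    ∃ d ⊆ c \ S, G.IsNClique (t - 1) d := by
  have hcS : (c ∩ S).card ≤ 1 := Finset.card_le_one.mpr fun u hu v hv =>
    hc.isClique.subsingleton_inter_of_isIndepSet hS (by simpa using hu) (by simpa using hv)
  have hcard : t - 1 ≤ (c \ S).card := by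
    have := Finset.card_sdiff_add_card_inter c S
    have := hc.card_eq
    omega
  obtain ⟨d, hd, hdcard⟩ := Finset.exists_subset_card_eq hcard
  exact ⟨d, hd, hc.isClique.subset (by simpa using hd.trans Finset.sdiff_subset), hdcard⟩

end SimpleGraph

theorem stmt_0_general {V : Type*} [DecidableEq V] {k t : ℕ}
    (G : SimpleGraph V) (hG : CliqueInEveryK G k t)
    (S : Finset V) (hS : ∀ u ∈ S, ∀ v ∈ S, u ≠ v → ¬ G.Adj u v) (hSk : S.card ≤ k) :
    CliqueInEveryK (G.induce ((↑S : Set V)ᶜ)) (k - S.card) (t - 1) := by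
  intro s hs
  set T := s.map (.subtype _)
  have hTS : Disjoint T S := Finset.disjoint_left.mpr fun v hv => by
    obtain ⟨⟨v, hvS⟩, -, rfl⟩ := Finset.mem_map.mp hv
    simpa using hvS
  have hcard : (T ∪ S).card = k := by
    rw [Finset.card_union_of_disjoint hTS, Finset.card_map, hs, Nat.sub_add_cancel hSk]
  obtain ⟨c, hcTS, hc⟩ := hG _ hcard
  obtain ⟨d, hd, hdc⟩ := hc.exists_isNClique_pred_subset_sdiff fun u hu v hv => hS u hu v hv
  have hdT : d ⊆ T := hd.trans (sdiff_le_iff.mpr (by rwa [sup_comm]))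
  exact hdc.exists_induce_isNClique_subset hdT

/-- If `G` is an `(n,k,t)`-graph and `S` is an independent set, then `G - S` is an
`(n - |S|, k - |S|, t - 1)`-graph. -/
theorem stmt_0 {V : Type*} [Fintype V] [DecidableEq V] {n k t : ℕ}
    (hn : Fintype.card V = n) (hkn : k ≤ n) (htk : t ≤ k) (ht : 1 ≤ t)
    (G : SimpleGraph V) (hG : CliqueInEveryK G k t)
    (S : Finset V) (hS : ∀ u ∈ S, ∀ v ∈ S, u ≠ v → ¬ G.Adj u v) (hSk : S.card ≤ k) :
    CliqueInEveryK (G.induce ((↑S : Set V)ᶜ)) (k - S.card) (t - 1) :=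
  stmt_0_general G hG S hS hSk
end

section
/- For any positive integers n ≥ k ≥ t and any r with 1 ≤ r ≤ k - t + 1 and r ≤ n, the graph consisting of r - 1 isolated vertices together with a clique on n - r + 1 vertices is an (n,k,t)-graph with independence number exactly r. -/
open SimpleGraph

/-- The independence number of `G`. -/
noncomputable def indepNum {V : Type*} (G : SimpleGraph V) : ℕ := Gᶜ.cliqueNum

/-- `(r-1)K₁ + K_{n-r+1}`: the first `r - 1` vertices are isolated and the remaining
`n - r + 1` vertices form a clique. -/
def isolatedPlusClique (n r : ℕ) : SimpleGraph (Fin n) :=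
  SimpleGraph.fromRel (fun v w => r - 1 ≤ (v : ℕ) ∧ r - 1 ≤ (w : ℕ))

/-!
If the vertices outside a set `I` form a clique, any `k ≥ |I| + t` vertices contain `t` vertices
of that clique, and the independence number is at most `|I| + 1`, since an independent set meets
a clique in at most one vertex. For `(r-1)K₁ + K_{n-r+1}` take `I` to be the `r - 1` isolated
vertices; these together with one clique vertex form an independent set of size `r`.
-/

open Finset

lemma indepNum_eq_simpleGraph_indepNum {V : Type*} (G : SimpleGraph V) :
    _root_.indepNum G = G.indepNum :=
  G.cliqueNum_compl

section CliqueOutside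

variable {V : Type*} [Fintype V] [DecidableEq V] {G : SimpleGraph V} {I : Finset V}

lemma card_le_card_inter_compl_add_card (s : Finset V) : #s ≤ #(s ∩ Iᶜ) + #I := by
  have hsI : #(s \ Iᶜ) ≤ #I := card_le_card fun v hv => by simpa using (mem_sdiff.mp hv).2
  have := card_inter_add_card_sdiff s Iᶜ
  omega

lemma cliqueInEveryK_of_isClique_compl {k t : ℕ} (hI : G.IsClique ((Iᶜ : Finset V) : Set V))
    (hcard : #I + t ≤ k) : CliqueInEveryK G k t := by
  intro s hs
  have ht : t ≤ #(s ∩ Iᶜ) := by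
    have := card_le_card_inter_compl_add_card (I := I) s
    omega
  obtain ⟨c, hc, rfl⟩ := exists_subset_card_eq ht
  exact ⟨c, hc.trans inter_subset_left,
    hI.subset fun v hv => mem_coe.mpr (mem_inter.mp (hc hv)).2, rfl⟩

lemma indepNum_le_card_add_one_of_isClique_compl (hI : G.IsClique ((Iᶜ : Finset V) : Set V)) :
    G.indepNum ≤ #I + 1 := by
  obtain ⟨s, hs⟩ := G.exists_isNIndepSet_indepNum
  have hclique : #(s ∩ Iᶜ) ≤ 1 := card_le_one.mpr fun v hv w hw => by
    rw [mem_inter] at hv hw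
    by_contra hvw
    exact hs.isIndepSet hv.1 hw.1 hvw (hI (mem_coe.mpr hv.2) (mem_coe.mpr hw.2) hvw)
  have := card_le_card_inter_compl_add_card (I := I) s
  have := hs.card_eq
  omega

end CliqueOutside

lemma isolatedPlusClique_adj {n r : ℕ} {v w : Fin n} :
    (isolatedPlusClique n r).Adj v w ↔ v ≠ w ∧ r - 1 ≤ (v : ℕ) ∧ r - 1 ≤ (w : ℕ) := by
  simp only [isolatedPlusClique, fromRel_adj]
  tauto

lemma isClique_isolatedPlusClique (n r : ℕ) :
    (isolatedPlusClique n r).IsClique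
      ((({v | (v : ℕ) < r - 1} : Finset (Fin n))ᶜ : Finset (Fin n)) : Set (Fin n)) := by
  intro v hv w hw hvw
  simp only [compl_filter, not_lt, coe_filter, mem_univ, true_and, Set.mem_ofPred_eq] at hv hw
  exact isolatedPlusClique_adj.mpr ⟨hvw, hv, hw⟩

lemma isIndepSet_isolatedPlusClique (n r : ℕ) :
    (isolatedPlusClique n r).IsIndepSet (({v | (v : ℕ) < r} : Finset (Fin n)) : Set (Fin n)) := by
  intro v hv w hw hvw hadj
  simp only [coe_filter, mem_univ, true_and, Set.mem_ofPred_eq] at hv hw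
  obtain ⟨-, hv', hw'⟩ := isolatedPlusClique_adj.mp hadj
  exact hvw (Fin.ext (by omega))

theorem stmt_2_general {n k t r : ℕ} (htk : t ≤ k)
    (hr1 : 1 ≤ r) (hrk : r ≤ k - t + 1) (hrn : r ≤ n) :
    CliqueInEveryK (isolatedPlusClique n r) k t ∧ _root_.indepNum (isolatedPlusClique n r) = r := by
  have hisolated : #({v | (v : ℕ) < r - 1} : Finset (Fin n)) ≤ r - 1 := by
    simp [Fin.card_filter_val_lt]
  rw [indepNum_eq_simpleGraph_indepNum]
  refine ⟨cliqueInEveryK_of_isClique_compl (isClique_isolatedPlusClique n r) ?_,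
    le_antisymm ?_ ?_⟩
  · omega
  · have := indepNum_le_card_add_one_of_isClique_compl (isClique_isolatedPlusClique n r)
    omega
  · simpa [Fin.card_filter_val_lt, hrn] using (isIndepSet_isolatedPlusClique n r).card_le_indepNum

/-- For `1 ≤ r ≤ k - t + 1`, `r ≤ n`, the graph `(r-1)K₁ + K_{n-r+1}` is an
`(n,k,t)`-graph with independence number exactly `r`. -/
theorem stmt_2 {n k t r : ℕ} (hkn : k ≤ n) (htk : t ≤ k) (ht : 1 ≤ t)
    (hr1 : 1 ≤ r) (hrk : r ≤ k - t + 1) (hrn : r ≤ n) :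
    CliqueInEveryK (isolatedPlusClique n r) k t ∧ _root_.indepNum (isolatedPlusClique n r) = r :=
  stmt_2_general htk hr1 hrk hrn
end

section
/- Let Γ be a graph on n vertices that is a disjoint union of cliques, with A the union of components having fewer than t vertices and B the union of components with at least t vertices. Then the maximum number of vertices of an induced subgraph of Γ containing no clique on t vertices equals (t-1)·c(B) + |V(A)|, where c(B) is the number of components of B. -/
open SimpleGraph

/-- Every connected component of `G` is a complete graph. -/
def IsDisjointUnionOfCliques {V : Type*} (G : SimpleGraph V) : Prop :=
  ∀ u v : V, G.Reachable u v → u ≠ v → G.Adj u v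

/-- The number of components of `Γ` having at least `t` vertices (the components of `B`). -/
noncomputable def numBigComponents {V : Type*} (Γ : SimpleGraph V) (t : ℕ) : ℕ :=
  Nat.card {C : Γ.ConnectedComponent // t ≤ Nat.card C.supp}

/-- The number of vertices lying in components with fewer than `t` vertices (`|V(A)|`). -/
noncomputable def numSmallVertices {V : Type*} (Γ : SimpleGraph V) (t : ℕ) : ℕ :=
  Nat.card {v : V // Nat.card (Γ.connectedComponentMk v).supp < t}

/-!
Inside a disjoint union of cliques, a set of vertices spans a `K_t` exactly when `t` of its
vertices lie in one component. So the `K_t`-free vertex sets are those meeting every component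
`C` in at most `t - 1` vertices, and the largest of them has `∑_C min(|C|, t - 1)` vertices:
`t - 1` for each component with at least `t` vertices and `|C|` for each of the others.
-/

open Finset

theorem Finset.exists_subset_card_filter_eq {α ι : Type*} [DecidableEq α] [DecidableEq ι]
    [Fintype ι] {s : Finset α} {g : α → ι} {k : ι → ℕ} (hk : ∀ i, k i ≤ #{a ∈ s | g a = i}) :
    ∃ u ⊆ s, ∀ i, #{a ∈ u | g a = i} = k i := by
  choose f hfs hfk using fun i => exists_subset_card_eq (hk i)
  have hf : ∀ i, ∀ a ∈ f i, g a = i := fun i a ha => (mem_filter.1 (hfs i ha)).2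
  refine ⟨univ.biUnion f, biUnion_subset.2 fun i _ => (hfs i).trans (filter_subset _ _),
    fun i => ?_⟩
  convert hfk i using 2
  ext a
  simp only [mem_filter, mem_biUnion, mem_univ, true_and]
  constructor
  · rintro ⟨⟨j, hj⟩, rfl⟩
    rwa [hf j a hj]
  · exact fun ha => ⟨⟨i, ha⟩, hf i a ha⟩

namespace SimpleGraph

variable {V : Type*} {G : SimpleGraph V}

theorem IsClique.connectedComponentMk_eq {c : Set V} (hc : G.IsClique c) {u v : V}
    (hu : u ∈ c) (hv : v ∈ c) : G.connectedComponentMk u = G.connectedComponentMk v := by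
  rcases eq_or_ne u v with rfl | huv
  · rfl
  · exact ConnectedComponent.sound (hc hu hv huv).reachable

theorem card_filter_connectedComponentMk_eq [Fintype V] [DecidableEq G.ConnectedComponent]
    (C : G.ConnectedComponent) : #{v | G.connectedComponentMk v = C} = Nat.card C.supp := by
  classical
  rw [Nat.card_eq_card_toFinset]
  congr 1
  ext v
  simp [ConnectedComponent.mem_supp_iff]

theorem sum_min_card_supp_eq [Fintype V] [Fintype G.ConnectedComponent] (t : ℕ) :
    ∑ C : G.ConnectedComponent, min (Nat.card C.supp) (t - 1)
      = (t - 1) * numBigComponents G t + numSmallVertices G t := by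
  classical
  have hbig :
      ∑ C : G.ConnectedComponent with t ≤ Nat.card C.supp, min (Nat.card C.supp) (t - 1)
        = (t - 1) * numBigComponents G t := by
    rw [sum_congr rfl fun C hC => min_eq_right (by have := (mem_filter.1 hC).2; omega),
      sum_const, smul_eq_mul, mul_comm, numBigComponents, Nat.card_eq_fintype_card,
      Fintype.card_subtype]
  have hsmall :
      ∑ C : G.ConnectedComponent with ¬ t ≤ Nat.card C.supp, min (Nat.card C.supp) (t - 1)
        = numSmallVertices G t := by
    rw [numSmallVertices, Nat.card_eq_fintype_card, Fintype.card_subtype,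
      card_eq_sum_card_fiberwise (f := G.connectedComponentMk)
        (t := {C : G.ConnectedComponent | ¬ t ≤ Nat.card C.supp})
        fun v hv => by
          simpa only [coe_filter, mem_univ, true_and, not_le, Set.mem_ofPred_eq] using hv]
    refine sum_congr rfl fun C hC => ?_
    have hCt := (mem_filter.1 hC).2
    rw [min_eq_left (by omega), ← card_filter_connectedComponentMk_eq, filter_filter]
    congr 1
    ext v
    simp only [mem_filter, mem_univ, true_and]
    constructor
    · rintro rfl
      exact ⟨by omega, rfl⟩
    · exact And.right
  rw [← sum_filter_add_sum_filter_not univ (fun C => t ≤ Nat.card C.supp), hbig, hsmall]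

end SimpleGraph

namespace IsDisjointUnionOfCliques

variable {V : Type*} {G : SimpleGraph V}

theorem isClique_of_connectedComponentMk_eq (hG : IsDisjointUnionOfCliques G) {c : Set V}
    {C : G.ConnectedComponent} (hc : ∀ v ∈ c, G.connectedComponentMk v = C) : G.IsClique c :=
  fun u hu v hv huv => hG u v (ConnectedComponent.exact ((hc u hu).trans (hc v hv).symm)) huv

variable [DecidableEq G.ConnectedComponent]

theorem forall_not_isNClique_iff (hG : IsDisjointUnionOfCliques G) {t : ℕ} (ht : 1 ≤ t)
    (s : Finset V) : (∀ c ⊆ s, ¬ G.IsNClique t c) ↔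
      ∀ C : G.ConnectedComponent, #{v ∈ s | G.connectedComponentMk v = C} < t := by
  constructor
  · intro hs C
    by_contra! hC
    obtain ⟨c, hcs, hcard⟩ := exists_subset_card_eq hC
    exact hs c (hcs.trans (filter_subset _ _))
      ⟨hG.isClique_of_connectedComponentMk_eq fun v hv => (mem_filter.1 (hcs hv)).2, hcard⟩
  · rintro hs c hcs hc
    obtain ⟨v₀, hv₀⟩ : c.Nonempty := card_pos.1 (hc.card_eq ▸ ht)
    have hsub : c ⊆ {v ∈ s | G.connectedComponentMk v = G.connectedComponentMk v₀} :=
      fun v hv => mem_filter.2 ⟨hcs hv, hc.isClique.connectedComponentMk_eq hv hv₀⟩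
    exact (card_le_card hsub).not_gt (hc.card_eq ▸ hs _)

theorem isGreatest_card_of_forall_not_isNClique [Fintype V] [DecidableEq V]
    [Fintype G.ConnectedComponent]
    (hG : IsDisjointUnionOfCliques G) {t : ℕ} (ht : 1 ≤ t) :
    IsGreatest {m | ∃ s : Finset V, s.card = m ∧ ∀ c ⊆ s, ¬ G.IsNClique t c}
      (∑ C : G.ConnectedComponent, min (Nat.card C.supp) (t - 1)) := by
  have hcard (s : Finset V) : #s = ∑ C, #{v ∈ s | G.connectedComponentMk v = C} :=
    card_eq_sum_card_fiberwise fun v _ => mem_univ _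
  constructor
  · obtain ⟨s, -, hs⟩ := exists_subset_card_filter_eq (s := univ) (g := G.connectedComponentMk)
      (k := fun C => min (Nat.card C.supp) (t - 1))
      fun C => by rw [card_filter_connectedComponentMk_eq]; exact min_le_left _ _
    refine ⟨s, (hcard s).trans (sum_congr rfl fun C _ => hs C),
      (hG.forall_not_isNClique_iff ht s).2 fun C => ?_⟩
    rw [hs C]
    omega
  · rintro _ ⟨s, rfl, hs⟩
    rw [hcard s]
    refine sum_le_sum fun C _ => le_min ?_ ?_
    · rw [← card_filter_connectedComponentMk_eq]
      exact card_le_card (filter_subset_filter _ (subset_univ s))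
    · exact Nat.le_sub_one_of_lt ((hG.forall_not_isNClique_iff ht s).1 hs C)

end IsDisjointUnionOfCliques

theorem stmt_5_general {V : Type*} [Fintype V] {t : ℕ} (ht : 1 ≤ t)
    (Γ : SimpleGraph V) (hΓ : IsDisjointUnionOfCliques Γ) :
    sSup {m | ∃ s : Finset V, s.card = m ∧ ∀ c ⊆ s, ¬ Γ.IsNClique t c}
      = (t - 1) * numBigComponents Γ t + numSmallVertices Γ t := by
  classical
  rw [(hΓ.isGreatest_card_of_forall_not_isNClique ht).csSup_eq, sum_min_card_supp_eq]

/-- If `Γ` is a disjoint union of cliques, the largest `K_t`-free (induced) subgraph of `Γ`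
has exactly `(t-1)·c(B) + |V(A)|` vertices. -/
theorem stmt_5 {V : Type*} [Fintype V] [DecidableEq V] {t : ℕ} (ht : 1 ≤ t)
    (Γ : SimpleGraph V) (hΓ : IsDisjointUnionOfCliques Γ) :
    sSup {m | ∃ s : Finset V, s.card = m ∧ ∀ c ⊆ s, ¬ Γ.IsNClique t c}
      = (t - 1) * numBigComponents Γ t + numSmallVertices Γ t :=
  stmt_5_general ht Γ hΓ
end

section
/- Let Γ be an (n,k,t)-graph that is a disjoint union of cliques and which is not an (n, k-1, t)-graph. With A the union of components with fewer than t vertices and B the union of components with at least t vertices, we have k - 1 = (t-1)·c(B) + |V(A)|. -/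
/-!
In a disjoint union of cliques a vertex set spans a `t`-clique exactly when it has at least `t`
vertices in one component. Hence the largest `t`-clique-free vertex sets have
`∑_C min(|C|, t - 1)` vertices, `Γ` is an `(n,k,t)`-graph exactly when `k` exceeds this number,
and so `k - 1` equals it. Components with at least `t` vertices contribute `t - 1` each, the
others all their vertices.
-/

open SimpleGraph

namespace SimpleGraph

variable {V : Type*} {Γ : SimpleGraph V}

theorem IsClique.connectedComponentMk_eq_s7 {s : Set V} (hs : Γ.IsClique s) {u v : V}
    (hu : u ∈ s) (hv : v ∈ s) : Γ.connectedComponentMk u = Γ.connectedComponentMk v := by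
  rcases eq_or_ne u v with rfl | huv
  · rfl
  · exact ConnectedComponent.eq.mpr (hs hu hv huv).reachable

theorem _root_.IsDisjointUnionOfCliques.isClique_of_subset_supp
    (hΓ : IsDisjointUnionOfCliques Γ) {C : Γ.ConnectedComponent} {s : Set V}
    (hs : s ⊆ C.supp) : Γ.IsClique s := by
  intro u hu v hv huv
  refine hΓ u v (ConnectedComponent.eq.mp ?_) huv
  rw [(hs hu : Γ.connectedComponentMk u = C), (hs hv : Γ.connectedComponentMk v = C)]

variable [Finite V] [Fintype Γ.ConnectedComponent]

theorem natCard_subtype_connectedComponentMk (P : Γ.ConnectedComponent → Prop)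
    [DecidablePred P] :
    Nat.card {v // P (Γ.connectedComponentMk v)} = ∑ C with P C, Nat.card C.supp := by
  classical
  have := Fintype.ofFinite V
  rw [Nat.card_eq_fintype_card, Fintype.card_subtype,
    Finset.card_eq_sum_card_fiberwise (f := Γ.connectedComponentMk) (t := Finset.univ.filter P)
      (fun v hv => by simpa using hv)]
  refine Finset.sum_congr rfl fun C hC => ?_
  rw [Nat.card_coe_set_eq, Set.ncard_eq_toFinset_card']
  congr 1
  ext v
  simp only [Finset.mem_filter, Finset.mem_univ, true_and, Set.mem_toFinset,
    ConnectedComponent.mem_supp_iff]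
  exact ⟨And.right, fun h => ⟨h ▸ (Finset.mem_filter.mp hC).2, h⟩⟩

variable (Γ) in
noncomputable def cliqueFreeBound (t : ℕ) : ℕ :=
  ∑ C : Γ.ConnectedComponent, min (Nat.card C.supp) (t - 1)

theorem cliqueFreeBound_eq (t : ℕ) :
    Γ.cliqueFreeBound t = (t - 1) * numBigComponents Γ t + numSmallVertices Γ t := by
  classical
  have hbig : numBigComponents Γ t =
      (Finset.univ.filter fun C : Γ.ConnectedComponent => t ≤ Nat.card C.supp).card := by
    rw [numBigComponents, Nat.card_eq_fintype_card, Fintype.card_subtype]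
  rw [cliqueFreeBound, hbig, numSmallVertices,
    natCard_subtype_connectedComponentMk fun C => Nat.card C.supp < t,
    ← Finset.sum_filter_add_sum_filter_not _ fun C => t ≤ Nat.card C.supp]
  congr 1
  · rw [Finset.sum_congr rfl fun C hC => min_eq_right (by grind), Finset.sum_const, smul_eq_mul,
      mul_comm]
  · exact Finset.sum_congr (by simp only [not_le]) fun C hC => min_eq_left (by grind)

theorem card_le_cliqueFreeBound (hΓ : IsDisjointUnionOfCliques Γ) {t : ℕ}
    {s : Finset V} (hs : ∀ c ⊆ s, ¬ Γ.IsNClique t c) : s.card ≤ Γ.cliqueFreeBound t := by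
  classical
  rw [Finset.card_eq_sum_card_fiberwise (f := Γ.connectedComponentMk) (t := Finset.univ)
    (fun _ _ => Finset.mem_univ _)]
  refine Finset.sum_le_sum fun C _ => le_min ?_ ?_
  · rw [Nat.card_coe_set_eq, ← Set.ncard_coe_finset]
    exact Set.ncard_le_ncard fun v hv => (Finset.mem_filter.mp hv).2
  · by_contra! h
    obtain ⟨c, hcs, hct⟩ := Finset.exists_subset_card_eq
      (s := s.filter (Γ.connectedComponentMk · = C)) (n := t) (by omega)
    refine hs c (hcs.trans (Finset.filter_subset _ _)) ⟨?_, hct⟩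
    exact hΓ.isClique_of_subset_supp (C := C) fun v hv => (Finset.mem_filter.mp (hcs hv)).2

theorem exists_card_eq_cliqueFreeBound {t : ℕ} (ht : 1 ≤ t) :
    ∃ s : Finset V, s.card = Γ.cliqueFreeBound t ∧ ∀ c ⊆ s, ¬ Γ.IsNClique t c := by
  classical
  have hpick (C : Γ.ConnectedComponent) :
      ∃ p : Finset V, ↑p ⊆ C.supp ∧ p.card = min (Nat.card C.supp) (t - 1) := by
    obtain ⟨p, hpC, hp⟩ := Set.exists_subset_card_eq (s := C.supp)
      (n := min (Nat.card C.supp) (t - 1)) (by simp [← Nat.card_coe_set_eq])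
    have hfin : p.Finite := (Set.toFinite C.supp).subset hpC
    exact ⟨hfin.toFinset, by simpa using hpC, by rw [← hp, Set.ncard_eq_toFinset_card]⟩
  choose p hpC hp using hpick
  have hmk {C : Γ.ConnectedComponent} {v : V} (hv : v ∈ p C) : Γ.connectedComponentMk v = C :=
    hpC C hv
  refine ⟨Finset.univ.biUnion p, ?_, fun c hcs hc => ?_⟩
  · rw [Finset.card_biUnion fun C _ D _ hCD => Finset.disjoint_left.mpr fun v hvC hvD =>
      hCD ((hmk hvC).symm.trans (hmk hvD))]
    exact Finset.sum_congr rfl fun C _ => hp C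
  · obtain ⟨u, hu⟩ : c.Nonempty := Finset.card_pos.mp (hc.card_eq ▸ ht)
    have hcp : c ⊆ p (Γ.connectedComponentMk u) := fun v hv => by
      obtain ⟨D, -, hvD⟩ := Finset.mem_biUnion.mp (hcs hv)
      rwa [← hc.isClique.connectedComponentMk_eq_s7 hv hu, hmk hvD]
    have hct := (Finset.card_le_card hcp).trans_eq (hp _)
    rw [hc.card_eq] at hct
    omega

theorem cliqueInEveryK_iff [DecidableEq V] (hΓ : IsDisjointUnionOfCliques Γ) {k t : ℕ}
    (ht : 1 ≤ t) : CliqueInEveryK Γ k t ↔ Γ.cliqueFreeBound t < k := by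
  constructor
  · intro hk
    by_contra! hkb
    obtain ⟨s, hs, hsfree⟩ := exists_card_eq_cliqueFreeBound (Γ := Γ) ht
    obtain ⟨s', hs's, hs'k⟩ := Finset.exists_subset_card_eq (s := s) (n := k) (hs ▸ hkb)
    obtain ⟨c, hcs', hc⟩ := hk s' hs'k
    exact hsfree c (hcs'.trans hs's) hc
  · intro hbk s hs
    by_contra! hsfree
    exact (card_le_cliqueFreeBound hΓ hsfree).not_gt (hs ▸ hbk)

end SimpleGraph

theorem stmt_7_general {V : Type*} [Fintype V] [DecidableEq V] {k t : ℕ}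
    (ht : 1 ≤ t)
    (Γ : SimpleGraph V) (hΓkt : CliqueInEveryK Γ k t)
    (hnot : ¬ CliqueInEveryK Γ (k - 1) t) (hΓ : IsDisjointUnionOfCliques Γ) :
    (t - 1) * numBigComponents Γ t + numSmallVertices Γ t = k - 1 := by
  have := Fintype.ofFinite Γ.ConnectedComponent
  rw [SimpleGraph.cliqueInEveryK_iff hΓ ht] at hΓkt hnot
  rw [← SimpleGraph.cliqueFreeBound_eq]
  omega

/-- If `Γ` is an `(n,k,t)`-graph that is a disjoint union of cliques and is not an
`(n,k-1,t)`-graph, then `k - 1 = (t-1)·c(B) + |V(A)|`. -/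
theorem stmt_7 {V : Type*} [Fintype V] [DecidableEq V] {n k t : ℕ}
    (hn : Fintype.card V = n) (hkn : k ≤ n) (htk : t ≤ k) (ht : 1 ≤ t)
    (Γ : SimpleGraph V) (hΓkt : CliqueInEveryK Γ k t)
    (hnot : ¬ CliqueInEveryK Γ (k - 1) t) (hΓ : IsDisjointUnionOfCliques Γ) :
    (t - 1) * numBigComponents Γ t + numSmallVertices Γ t = k - 1 :=
  stmt_7_general ht Γ hΓkt hnot hΓ
end

section
/- The graphs 2K₂ + K₅ and K₁ + 2K₄ are both minimum (9,8,4)-graphs among graphs with independence number 3: both are 9-vertex graphs with independence number 3 in which every 8 vertices contain a clique on 4 vertices, and they have the same number of edges, both minimizing the number of edges among such graphs. In particular, minimum (n,k,t,r)-graphs need not be unique. -/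
open SimpleGraph

/-- The number of edges of `G`. -/
noncomputable def edgeCount {V : Type*} (G : SimpleGraph V) : ℕ := Nat.card G.edgeSet

/-- `2K₂ + K₅` on 9 vertices: blocks `{0,1}`, `{2,3}`, `{4,…,8}`. -/
def twoK2plusK5 : SimpleGraph (Fin 9) :=
  SimpleGraph.fromRel (fun v w =>
    (if (v : ℕ) < 2 then 0 else if (v : ℕ) < 4 then 1 else 2) =
    (if (w : ℕ) < 2 then 0 else if (w : ℕ) < 4 then 1 else 2))

/-- `K₁ + 2K₄` on 9 vertices: blocks `{0}`, `{1,…,4}`, `{5,…,8}`. -/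
def K1plus2K4 : SimpleGraph (Fin 9) :=
  SimpleGraph.fromRel (fun v w =>
    (if (v : ℕ) < 1 then 0 else if (v : ℕ) < 5 then 1 else 2) =
    (if (w : ℕ) < 1 then 0 else if (w : ℕ) < 5 then 1 else 2))


open Finset in


def cliqueEdges {V : Type*} [DecidableEq V] (s : Finset V) : Finset (Sym2 V) :=
  s.sym2.filter (fun e => ¬ e.IsDiag)

section
variable {V : Type*} [DecidableEq V]

lemma mem_cliqueEdges {s : Finset V} {x y : V} :
    s(x, y) ∈ cliqueEdges s ↔ (x ∈ s ∧ y ∈ s) ∧ x ≠ y := by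
  simp [cliqueEdges, Finset.mk_mem_sym2_iff]

lemma card_cliqueEdges (s : Finset V) : (cliqueEdges s).card = s.card.choose 2 := by
  have hdiag : s.sym2.filter (fun e => e.IsDiag) = s.image Sym2.diag := by
    ext e
    induction e with
    | _ x y =>
      simp only [Finset.mem_filter, Finset.mk_mem_sym2_iff, Finset.mem_image,
        Sym2.isDiag_iff_proj_eq]
      constructor
      · rintro ⟨⟨hx, _⟩, h⟩
        exact ⟨x, hx, by simp [Sym2.diag, h]⟩
      · rintro ⟨b, hb, h⟩
        rw [Sym2.diag, Sym2.eq_iff] at h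
        rcases h with ⟨rfl, rfl⟩ | ⟨rfl, rfl⟩ <;> exact ⟨⟨hb, hb⟩, rfl⟩
  have h1 := Finset.card_filter_add_card_filter_not (s := s.sym2)
    (p := fun e => e.IsDiag)
  rw [hdiag, Finset.card_image_of_injective _ Sym2.diag_injective, Finset.card_sym2] at h1
  have h2 : (s.card + 1).choose 2 = s.card.choose 2 + s.card := by
    rw [Nat.choose_succ_succ]
    simp [Nat.add_comm]
  unfold cliqueEdges
  omega

lemma cliqueEdges_subset_edgeFinset {G : SimpleGraph V} [Fintype V] [DecidableRel G.Adj]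
    {s : Finset V} (h : G.IsClique s) : cliqueEdges s ⊆ G.edgeFinset := by
  intro e he
  induction e with
  | _ x y =>
    rw [mem_cliqueEdges] at he
    rw [SimpleGraph.mem_edgeFinset, SimpleGraph.mem_edgeSet]
    exact h he.1.1 he.1.2 he.2

lemma cliqueEdges_inter_subset (s t : Finset V) :
    cliqueEdges s ∩ cliqueEdges t ⊆ cliqueEdges (s ∩ t) := by
  intro e he
  induction e with
  | _ x y =>
    rw [Finset.mem_inter, mem_cliqueEdges, mem_cliqueEdges] at he
    rw [mem_cliqueEdges]
    simp only [Finset.mem_inter]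
    tauto

lemma sym2_ne₁ {p1 q1 p2 q2 : V} (h1 : p1 ≠ p2) (h2 : p1 ≠ q2) : s(p1, q1) ≠ s(p2, q2) := by
  rw [Ne, Sym2.eq_iff]; tauto

lemma sym2_ne₂ {p1 q1 p2 q2 : V} (h1 : q1 ≠ q2) (h2 : q1 ≠ p2) : s(p1, q1) ≠ s(p2, q2) := by
  rw [Ne, Sym2.eq_iff]; tauto

end

lemma noIndep4 {G : SimpleGraph (Fin 9)} (hI : _root_.indepNum G = 3) :
    ∀ w x y z : Fin 9, w ≠ x → w ≠ y → w ≠ z → x ≠ y → x ≠ z → y ≠ z →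
    ¬G.Adj w x → ¬G.Adj w y → ¬G.Adj w z → ¬G.Adj x y → ¬G.Adj x z → ¬G.Adj y z → False := by
  intro w x y z hwx hwy hwz hxy hxz hyz awx awy awz axy axz ayz
  have hclq : Gᶜ.IsClique ({w, x, y, z} : Finset (Fin 9)) := by
    intro u hu v hv huv
    simp only [Finset.coe_insert, Set.mem_insert_iff, Finset.coe_singleton,
      Set.mem_singleton_iff] at hu hv
    rw [SimpleGraph.compl_adj]
    refine ⟨huv, ?_⟩
    have swx : ¬G.Adj x w := fun h => awx h.symm
    have swy : ¬G.Adj y w := fun h => awy h.symm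
    have swz : ¬G.Adj z w := fun h => awz h.symm
    have sxy : ¬G.Adj y x := fun h => axy h.symm
    have sxz : ¬G.Adj z x := fun h => axz h.symm
    have syz : ¬G.Adj z y := fun h => ayz h.symm
    rcases hu with rfl | rfl | rfl | rfl <;> rcases hv with rfl | rfl | rfl | rfl <;>
      first | exact (huv rfl).elim | assumption
  have hcard : ({w, x, y, z} : Finset (Fin 9)).card = 4 := by
    rw [Finset.card_insert_of_notMem (by simp [hwx, hwy, hwz]),
      Finset.card_insert_of_notMem (by simp [hxy, hxz]),
      Finset.card_insert_of_notMem (by simp [hyz]), Finset.card_singleton]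
  have h4 := SimpleGraph.IsClique.card_le_cliqueNum (G := Gᶜ) (tc := hclq)
  rw [hcard] at h4
  rw [_root_.indepNum] at hI
  omega

lemma main_bound (G : SimpleGraph (Fin 9))
    (hK : ∀ s : Finset (Fin 9), s.card = 8 → ∃ c ⊆ s, G.IsNClique 4 c)
    (hI : _root_.indepNum G = 3) : 12 ≤ edgeCount G := by
  classical
  have hEC : edgeCount G = G.edgeFinset.card := by
    rw [edgeCount, Nat.card_eq_fintype_card, SimpleGraph.edgeFinset_card]
  rw [hEC]
  have hni := noIndep4 hI
  obtain ⟨C, hCsub, hC⟩ := hK (Finset.univ.erase 0) (by simp)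
  have hCcard := hC.card_eq
  obtain ⟨a, haC⟩ : ∃ a, a ∈ C := Finset.card_pos.mp (by omega)
  obtain ⟨D, hDsub, hD⟩ := hK (Finset.univ.erase a) (by simp)
  have hDcard := hD.card_eq
  have haD : a ∉ D := fun h => (Finset.mem_erase.mp (hDsub h)).1 rfl
  have hkle : (C ∩ D).card ≤ 3 := by
    have hsub : C ∩ D ⊆ C.erase a := by
      intro v hv
      rw [Finset.mem_erase]
      exact ⟨fun h => haD (h ▸ (Finset.mem_inter.mp hv).2), (Finset.mem_inter.mp hv).1⟩
    calc (C ∩ D).card ≤ (C.erase a).card := Finset.card_le_card hsub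
    _ = 3 := by rw [Finset.card_erase_of_mem haC, hCcard]
  have hsubCD : cliqueEdges C ∪ cliqueEdges D ⊆ G.edgeFinset :=
    Finset.union_subset (cliqueEdges_subset_edgeFinset hC.isClique)
      (cliqueEdges_subset_edgeFinset hD.isClique)
  have hbase : 12 - (C ∩ D).card.choose 2 ≤ (cliqueEdges C ∪ cliqueEdges D).card := by
    have h1 := Finset.card_union_add_card_inter (cliqueEdges C) (cliqueEdges D)
    have h2 : (cliqueEdges C ∩ cliqueEdges D).card ≤ (C ∩ D).card.choose 2 := by
      rw [← card_cliqueEdges]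
      exact Finset.card_le_card (cliqueEdges_inter_subset C D)
    have h3 := card_cliqueEdges C
    have h4 := card_cliqueEdges D
    rw [hCcard] at h3; rw [hDcard] at h4
    have c42 : Nat.choose 4 2 = 6 := by decide
    omega
  rcases Nat.lt_or_ge (C ∩ D).card 2 with hk1 | hk2
  · have hch : (C ∩ D).card.choose 2 = 0 := Nat.choose_eq_zero_of_lt hk1
    have hle := Finset.card_le_card hsubCD
    omega
  set U := C ∪ D with hUdef
  have haU : a ∈ U := Finset.mem_union_left _ haC
  have hUcard : U.card + (C ∩ D).card = 8 := by
    have h := Finset.card_union_add_card_inter C D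
    rw [← hUdef] at h
    omega
  have hOcard : (Finset.univ \ U).card + U.card = 9 := by
    rw [Finset.card_sdiff_of_subset (Finset.subset_univ U)]
    have : U.card ≤ 9 := by
      calc U.card ≤ (Finset.univ : Finset (Fin 9)).card := Finset.card_le_card (Finset.subset_univ U)
      _ = 9 := by simp
    simp
    omega
  rcases Nat.lt_or_ge (C ∩ D).card 3 with hk2' | hk3
  · -- |C ∩ D| = 2
    have hO3 : (Finset.univ \ U).card = 3 := by omega
    obtain ⟨o1, o2, o3, h12, h13, h23, hOeq⟩ := Finset.card_eq_three.mp hO3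
    have ho1 : o1 ∉ U := (Finset.mem_sdiff.mp (hOeq ▸ (by simp : o1 ∈ ({o1,o2,o3} : Finset (Fin 9))))).2
    have ho2 : o2 ∉ U := (Finset.mem_sdiff.mp (hOeq ▸ (by simp : o2 ∈ ({o1,o2,o3} : Finset (Fin 9))))).2
    have ho3 : o3 ∉ U := (Finset.mem_sdiff.mp (hOeq ▸ (by simp : o3 ∈ ({o1,o2,o3} : Finset (Fin 9))))).2
    have hcross : ∃ v w, v ∉ U ∧ G.Adj v w := by
      by_contra hcon
      push_neg at hcon
      exact hni o1 o2 o3 a h12 h13 (fun h => ho1 (h ▸ haU)) h23 (fun h => ho2 (h ▸ haU))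
        (fun h => ho3 (h ▸ haU)) (hcon o1 o2 ho1) (hcon o1 o3 ho1) (hcon o1 a ho1)
        (hcon o2 o3 ho2) (hcon o2 a ho2) (hcon o3 a ho3)
    obtain ⟨v, w, hvU, hvw⟩ := hcross
    have hnm : s(v, w) ∉ cliqueEdges C ∪ cliqueEdges D := by
      intro hm
      rcases Finset.mem_union.mp hm with h | h
      · exact hvU (Finset.mem_union_left _ (mem_cliqueEdges.mp h).1.1)
      · exact hvU (Finset.mem_union_right _ (mem_cliqueEdges.mp h).1.1)
    have hFsub : insert s(v, w) (cliqueEdges C ∪ cliqueEdges D) ⊆ G.edgeFinset :=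
      Finset.insert_subset (by rwa [SimpleGraph.mem_edgeFinset, SimpleGraph.mem_edgeSet]) hsubCD
    have hci := Finset.card_insert_of_notMem hnm
    have hle := Finset.card_le_card hFsub
    have hk : (C ∩ D).card = 2 := by omega
    have c22 : Nat.choose 2 2 = 1 := by decide
    rw [hk] at hbase
    omega
  -- |C ∩ D| = 3
  have hk : (C ∩ D).card = 3 := le_antisymm hkle hk3
  have hU5 : U.card = 5 := by omega
  have hO4 : (Finset.univ \ U).card = 4 := by omega
  obtain ⟨o1, ho1O⟩ : ∃ o, o ∈ Finset.univ \ U := Finset.card_pos.mp (by omega)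
  have he3 : ((Finset.univ \ U).erase o1).card = 3 := by
    rw [Finset.card_erase_of_mem ho1O, hO4]
  obtain ⟨o2, o3, o4, h23, h24, h34, hEq⟩ := Finset.card_eq_three.mp he3
  have ho1 : o1 ∉ U := (Finset.mem_sdiff.mp ho1O).2
  have ho2E : o2 ∈ (Finset.univ \ U).erase o1 := hEq ▸ (by simp)
  have ho3E : o3 ∈ (Finset.univ \ U).erase o1 := hEq ▸ (by simp)
  have ho4E : o4 ∈ (Finset.univ \ U).erase o1 := hEq ▸ (by simp)
  have h12 : o1 ≠ o2 := fun h => (Finset.mem_erase.mp ho2E).1 h.symm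
  have h13 : o1 ≠ o3 := fun h => (Finset.mem_erase.mp ho3E).1 h.symm
  have h14 : o1 ≠ o4 := fun h => (Finset.mem_erase.mp ho4E).1 h.symm
  have ho2 : o2 ∉ U := (Finset.mem_sdiff.mp (Finset.mem_of_mem_erase ho2E)).2
  have ho3 : o3 ∉ U := (Finset.mem_sdiff.mp (Finset.mem_of_mem_erase ho3E)).2
  have ho4 : o4 ∉ U := (Finset.mem_sdiff.mp (Finset.mem_of_mem_erase ho4E)).2
  have hCD1 : (C \ D).card = 1 := by
    have := Finset.card_inter_add_card_sdiff C D
    omega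
  obtain ⟨a', hCDeq'⟩ := Finset.card_eq_one.mp hCD1
  have hCDa : C \ D = {a} := by
    have haCD : a ∈ C \ D := Finset.mem_sdiff.mpr ⟨haC, haD⟩
    rw [hCDeq'] at haCD ⊢
    rw [Finset.mem_singleton.mp haCD]
  have hDC1 : (D \ C).card = 1 := by
    have h' := Finset.card_inter_add_card_sdiff D C
    rw [Finset.inter_comm] at h'
    omega
  obtain ⟨x, hDCeq⟩ := Finset.card_eq_one.mp hDC1
  have hxDC : x ∈ D \ C := hDCeq ▸ Finset.mem_singleton_self x
  have hxD : x ∈ D := (Finset.mem_sdiff.mp hxDC).1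
  have hxC : x ∉ C := (Finset.mem_sdiff.mp hxDC).2
  have hxU : x ∈ U := Finset.mem_union_right _ hxD
  have hax : a ≠ x := fun h => hxC (h ▸ haC)
  by_cases hadj : G.Adj a x
  · -- U is a 5-clique
    have hUclq : G.IsClique (U : Finset (Fin 9)) := by
      intro v hv w hw hvw
      rcases Finset.mem_union.mp hv with hvC | hvD' <;>
        rcases Finset.mem_union.mp hw with hwC | hwD'
      · exact hC.isClique hvC hwC hvw
      · by_cases hvD2 : v ∈ D
        · exact hD.isClique hvD2 hwD' hvw
        · by_cases hwC2 : w ∈ C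
          · exact hC.isClique hvC hwC2 hvw
          · have hva : v = a := Finset.mem_singleton.mp (hCDa ▸ Finset.mem_sdiff.mpr ⟨hvC, hvD2⟩)
            have hwx : w = x := Finset.mem_singleton.mp (hDCeq ▸ Finset.mem_sdiff.mpr ⟨hwD', hwC2⟩)
            rw [hva, hwx]
            exact hadj
      · by_cases hwD2 : w ∈ D
        · exact hD.isClique hvD' hwD2 hvw
        · by_cases hvC2 : v ∈ C
          · exact hC.isClique hvC2 hwC hvw
          · have hvx : v = x := Finset.mem_singleton.mp (hDCeq ▸ Finset.mem_sdiff.mpr ⟨hvD', hvC2⟩)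
            have hwa : w = a := Finset.mem_singleton.mp (hCDa ▸ Finset.mem_sdiff.mpr ⟨hwC, hwD2⟩)
            rw [hvx, hwa]
            exact hadj.symm
      · exact hD.isClique hvD' hwD' hvw
    have hUE : cliqueEdges U ⊆ G.edgeFinset := cliqueEdges_subset_edgeFinset hUclq
    have hUcardE : (cliqueEdges U).card = 10 := by
      rw [card_cliqueEdges, hU5]
      decide
    have hOedge : ∃ p q : Fin 9, p ∉ U ∧ q ∉ U ∧ G.Adj p q := by
      by_contra hcon
      push_neg at hcon
      exact hni o1 o2 o3 o4 h12 h13 h14 h23 h24 h34 (hcon _ _ ho1 ho2) (hcon _ _ ho1 ho3)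
        (hcon _ _ ho1 ho4) (hcon _ _ ho2 ho3) (hcon _ _ ho2 ho4) (hcon _ _ ho3 ho4)
    obtain ⟨p, q, hpU, hqU, hpq⟩ := hOedge
    have hsecond : ∃ v w : Fin 9, v ∉ U ∧ G.Adj v w ∧ s(v, w) ≠ s(p, q) := by
      by_contra hcon
      push_neg at hcon
      have hpO : p ∈ Finset.univ \ U := Finset.mem_sdiff.mpr ⟨Finset.mem_univ _, hpU⟩
      have h3' : ((Finset.univ \ U).erase p).card = 3 := by
        rw [Finset.card_erase_of_mem hpO, hO4]
      obtain ⟨r1, r2, r3, g12, g13, g23, hReq⟩ := Finset.card_eq_three.mp h3'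
      have hr1E : r1 ∈ (Finset.univ \ U).erase p := hReq ▸ (by simp)
      have hr2E : r2 ∈ (Finset.univ \ U).erase p := hReq ▸ (by simp)
      have hr3E : r3 ∈ (Finset.univ \ U).erase p := hReq ▸ (by simp)
      have hr1p : r1 ≠ p := (Finset.mem_erase.mp hr1E).1
      have hr2p : r2 ≠ p := (Finset.mem_erase.mp hr2E).1
      have hr3p : r3 ≠ p := (Finset.mem_erase.mp hr3E).1
      have hr1U : r1 ∉ U := (Finset.mem_sdiff.mp (Finset.mem_of_mem_erase hr1E)).2
      have hr2U : r2 ∉ U := (Finset.mem_sdiff.mp (Finset.mem_of_mem_erase hr2E)).2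
      have hr3U : r3 ∉ U := (Finset.mem_sdiff.mp (Finset.mem_of_mem_erase hr3E)).2
      have key : ∀ r r' : Fin 9, r ≠ p → r ∉ U → r' ≠ p → G.Adj r r' → False := by
        intro r r' hrp hrU hr'p hadj'
        have h := hcon r r' hrU hadj'
        rw [Sym2.eq_iff] at h
        rcases h with ⟨h1, _⟩ | ⟨_, h2⟩
        · exact hrp h1
        · exact hr'p h2
      have keya : ∀ r : Fin 9, r ≠ p → r ∉ U → G.Adj r a → False := by
        intro r hrp hrU hadj'
        have h := hcon r a hrU hadj'
        rw [Sym2.eq_iff] at h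
        rcases h with ⟨h1, _⟩ | ⟨_, h2⟩
        · exact hrp h1
        · exact hpU (h2 ▸ haU)
      exact hni r1 r2 r3 a g12 g13 (fun h => hr1U (h ▸ haU)) g23 (fun h => hr2U (h ▸ haU))
        (fun h => hr3U (h ▸ haU))
        (fun h => key r1 r2 hr1p hr1U hr2p h) (fun h => key r1 r3 hr1p hr1U hr3p h)
        (fun h => keya r1 hr1p hr1U h) (fun h => key r2 r3 hr2p hr2U hr3p h)
        (fun h => keya r2 hr2p hr2U h) (fun h => keya r3 hr3p hr3U h)
    obtain ⟨v, w, hvU, hvw, hvwne⟩ := hsecond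
    have hpqm : s(p, q) ∉ cliqueEdges U := fun h => hpU (mem_cliqueEdges.mp h).1.1
    have hnm2 : s(v, w) ∉ insert s(p, q) (cliqueEdges U) := by
      rw [Finset.mem_insert]
      rintro (h | h)
      · exact hvwne h
      · exact hvU (mem_cliqueEdges.mp h).1.1
    have hsub : insert s(v, w) (insert s(p, q) (cliqueEdges U)) ⊆ G.edgeFinset :=
      Finset.insert_subset (by rwa [SimpleGraph.mem_edgeFinset, SimpleGraph.mem_edgeSet])
        (Finset.insert_subset (by rwa [SimpleGraph.mem_edgeFinset, SimpleGraph.mem_edgeSet]) hUE)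
    have c1 := Finset.card_insert_of_notMem hnm2
    have c2 := Finset.card_insert_of_notMem hpqm
    have hle := Finset.card_le_card hsub
    omega
  · -- a and x not adjacent
    rw [hk] at hbase
    have c32 : Nat.choose 3 2 = 3 := by decide
    have hfin : ∀ p1 q1 p2 q2 p3 q3 : Fin 9, p1 ∉ U → p2 ∉ U → p3 ∉ U →
        G.Adj p1 q1 → G.Adj p2 q2 → G.Adj p3 q3 →
        s(p1, q1) ≠ s(p2, q2) → s(p1, q1) ≠ s(p3, q3) → s(p2, q2) ≠ s(p3, q3) →
        12 ≤ G.edgeFinset.card := by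
      intro p1 q1 p2 q2 p3 q3 hp1 hp2 hp3 ha1 ha2 ha3 hn12 hn13 hn23
      have hm : ∀ p q : Fin 9, p ∉ U → s(p, q) ∉ cliqueEdges C ∪ cliqueEdges D := by
        intro p q hp hmem
        rcases Finset.mem_union.mp hmem with h | h
        · exact hp (Finset.mem_union_left _ (mem_cliqueEdges.mp h).1.1)
        · exact hp (Finset.mem_union_right _ (mem_cliqueEdges.mp h).1.1)
      have hm3 := hm p3 q3 hp3
      have hm2 : s(p2, q2) ∉ insert s(p3, q3) (cliqueEdges C ∪ cliqueEdges D) := by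
        rw [Finset.mem_insert]
        rintro (h | h)
        · exact hn23 h
        · exact hm p2 q2 hp2 h
      have hm1 : s(p1, q1) ∉ insert s(p2, q2) (insert s(p3, q3) (cliqueEdges C ∪ cliqueEdges D)) := by
        rw [Finset.mem_insert, Finset.mem_insert]
        rintro (h | h | h)
        · exact hn12 h
        · exact hn13 h
        · exact hm p1 q1 hp1 h
      have hsub : insert s(p1, q1) (insert s(p2, q2) (insert s(p3, q3)
          (cliqueEdges C ∪ cliqueEdges D))) ⊆ G.edgeFinset :=
        Finset.insert_subset (by rwa [SimpleGraph.mem_edgeFinset, SimpleGraph.mem_edgeSet])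
          (Finset.insert_subset (by rwa [SimpleGraph.mem_edgeFinset, SimpleGraph.mem_edgeSet])
            (Finset.insert_subset (by rwa [SimpleGraph.mem_edgeFinset, SimpleGraph.mem_edgeSet])
              hsubCD))
      have c1 := Finset.card_insert_of_notMem hm1
      have c2 := Finset.card_insert_of_notMem hm2
      have c3 := Finset.card_insert_of_notMem hm3
      have hle := Finset.card_le_card hsub
      omega
    have cov : ∀ o o' : Fin 9, o ∉ U → o' ∉ U → o ≠ o' →
        G.Adj o o' ∨ (G.Adj o a ∨ G.Adj o x) ∨ (G.Adj o' a ∨ G.Adj o' x) := by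
      intro o o' ho ho' hne
      by_contra hcc
      push_neg at hcc
      obtain ⟨hoo', ⟨hoa, hox⟩, ho'a, ho'x⟩ := hcc
      exact hni a x o o' hax (fun h => ho (h.symm ▸ haU)) (fun h => ho' (h.symm ▸ haU))
        (fun h => ho (h.symm ▸ hxU)) (fun h => ho' (h.symm ▸ hxU)) hne
        hadj (fun h => hoa h.symm) (fun h => ho'a h.symm) (fun h => hox h.symm)
        (fun h => ho'x h.symm) hoo'
    have hcross : ∀ u : Fin 9, (G.Adj u a ∨ G.Adj u x) → ∃ y, y ∈ U ∧ G.Adj u y := by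
      intro u hu
      rcases hu with h | h
      · exact ⟨a, haU, h⟩
      · exact ⟨x, hxU, h⟩
    have hcase3 : ∀ u v w : Fin 9, u ∉ U → v ∉ U → w ∉ U → u ≠ v → u ≠ w → v ≠ w →
        (G.Adj u a ∨ G.Adj u x) → (G.Adj v a ∨ G.Adj v x) → (G.Adj w a ∨ G.Adj w x) →
        12 ≤ G.edgeFinset.card := by
      intro u v w hu hv hw huv huw hvw pu pv pw
      obtain ⟨yu, hyuU, hadju⟩ := hcross u pu
      obtain ⟨yv, hyvU, hadjv⟩ := hcross v pv
      obtain ⟨yw, hywU, hadjw⟩ := hcross w pw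
      exact hfin u yu v yv w yw hu hv hw hadju hadjv hadjw
        (sym2_ne₁ huv (fun h => hu (h ▸ hyvU))) (sym2_ne₁ huw (fun h => hu (h ▸ hywU)))
        (sym2_ne₁ hvw (fun h => hv (h ▸ hywU)))
    have hcase0 : ∀ u v w : Fin 9, u ∉ U → v ∉ U → w ∉ U → u ≠ v → u ≠ w → v ≠ w →
        ¬(G.Adj u a ∨ G.Adj u x) → ¬(G.Adj v a ∨ G.Adj v x) → ¬(G.Adj w a ∨ G.Adj w x) →
        12 ≤ G.edgeFinset.card := by
      intro u v w hu hv hw huv huw hvw pu pv pw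
      have auv : G.Adj u v := (cov u v hu hv huv).resolve_right (fun h => h.elim pu pv)
      have auw : G.Adj u w := (cov u w hu hw huw).resolve_right (fun h => h.elim pu pw)
      have avw : G.Adj v w := (cov v w hv hw hvw).resolve_right (fun h => h.elim pv pw)
      exact hfin u v u w v w hu hu hv auv auw avw
        (sym2_ne₂ hvw huv.symm) (sym2_ne₁ huv huw) (sym2_ne₁ huv huw)
    have hcase21 : ∀ u v w t : Fin 9, u ∉ U → v ∉ U → w ∉ U → t ∉ U →
        u ≠ v → u ≠ w → u ≠ t → v ≠ w → v ≠ t → w ≠ t →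
        (G.Adj u a ∨ G.Adj u x) → (G.Adj v a ∨ G.Adj v x) →
        ¬(G.Adj w a ∨ G.Adj w x) → ¬(G.Adj t a ∨ G.Adj t x) →
        12 ≤ G.edgeFinset.card := by
      intro u v w t hu hv hw ht huv huw hut hvw hvt hwt pu pv pw pt
      obtain ⟨yu, hyuU, hadju⟩ := hcross u pu
      obtain ⟨yv, hyvU, hadjv⟩ := hcross v pv
      have awt : G.Adj w t := (cov w t hw ht hwt).resolve_right (fun h => h.elim pw pt)
      exact hfin u yu v yv w t hu hv hw hadju hadjv awt
        (sym2_ne₁ huv (fun h => hu (h ▸ hyvU))) (sym2_ne₁ huw hut) (sym2_ne₁ hvw hvt)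
    by_cases p1 : G.Adj o1 a ∨ G.Adj o1 x <;> by_cases p2 : G.Adj o2 a ∨ G.Adj o2 x <;>
      by_cases p3 : G.Adj o3 a ∨ G.Adj o3 x <;> by_cases p4 : G.Adj o4 a ∨ G.Adj o4 x
    · exact hcase3 o1 o2 o3 ho1 ho2 ho3 h12 h13 h23 p1 p2 p3
    · exact hcase3 o1 o2 o3 ho1 ho2 ho3 h12 h13 h23 p1 p2 p3
    · exact hcase3 o1 o2 o4 ho1 ho2 ho4 h12 h14 h24 p1 p2 p4
    · exact hcase21 o1 o2 o3 o4 ho1 ho2 ho3 ho4 h12 h13 h14 h23 h24 h34 p1 p2 p3 p4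
    · exact hcase3 o1 o3 o4 ho1 ho3 ho4 h13 h14 h34 p1 p3 p4
    · exact hcase21 o1 o3 o2 o4 ho1 ho3 ho2 ho4 h13 h12 h14 h23.symm h34 h24 p1 p3 p2 p4
    · exact hcase21 o1 o4 o2 o3 ho1 ho4 ho2 ho3 h14 h12 h13 h24.symm h34.symm h23 p1 p4 p2 p3
    · exact hcase0 o2 o3 o4 ho2 ho3 ho4 h23 h24 h34 p2 p3 p4
    · exact hcase3 o2 o3 o4 ho2 ho3 ho4 h23 h24 h34 p2 p3 p4
    · exact hcase21 o2 o3 o1 o4 ho2 ho3 ho1 ho4 h23 h12.symm h24 h13.symm h34 h14 p2 p3 p1 p4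
    · exact hcase21 o2 o4 o1 o3 ho2 ho4 ho1 ho3 h24 h12.symm h23 h14.symm h34.symm h13 p2 p4 p1 p3
    · exact hcase0 o1 o3 o4 ho1 ho3 ho4 h13 h14 h34 p1 p3 p4
    · exact hcase21 o3 o4 o1 o2 ho3 ho4 ho1 ho2 h34 h13.symm h23.symm h14.symm h24.symm h12 p3 p4 p1 p2
    · exact hcase0 o1 o2 o4 ho1 ho2 ho4 h12 h14 h24 p1 p2 p4
    · exact hcase0 o1 o2 o3 ho1 ho2 ho3 h12 h13 h23 p1 p2 p3
    · exact hcase0 o1 o2 o3 ho1 ho2 ho3 h12 h13 h23 p1 p2 p3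


instance : DecidableRel twoK2plusK5.Adj := fun v w =>
  decidable_of_iff _ (SimpleGraph.fromRel_adj _ v w).symm

instance : DecidableRel K1plus2K4.Adj := fun v w =>
  decidable_of_iff _ (SimpleGraph.fromRel_adj _ v w).symm

lemma indepNum_eq_three' {V : Type*} [Fintype V] [DecidableEq V] (G : SimpleGraph V)
    (h3 : ∃ s, Gᶜ.IsNClique 3 s) (h4 : ∀ s, ¬ Gᶜ.IsNClique 4 s) : _root_.indepNum G = 3 := by
  unfold _root_.indepNum
  apply le_antisymm
  · by_contra h
    push_neg at h
    obtain ⟨s, hs⟩ := Gᶜ.exists_isNClique_cliqueNum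
    have h4le : 4 ≤ s.card := by rw [hs.card_eq]; omega
    obtain ⟨t, hts, htc⟩ := Finset.exists_subset_card_eq h4le
    exact h4 t ⟨hs.isClique.subset (Finset.coe_subset.mpr hts), htc⟩
  · obtain ⟨s, hs⟩ := h3
    have := SimpleGraph.IsClique.card_le_cliqueNum (G := Gᶜ) (tc := hs.isClique)
    rwa [hs.card_eq] at this

set_option maxRecDepth 10000

lemma edgeCount_twoK2plusK5 : edgeCount twoK2plusK5 = 12 := by
  rw [edgeCount, Nat.card_eq_fintype_card, ← SimpleGraph.edgeFinset_card]
  decide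

lemma edgeCount_K1plus2K4 : edgeCount K1plus2K4 = 12 := by
  rw [edgeCount, Nat.card_eq_fintype_card, ← SimpleGraph.edgeFinset_card]
  decide

lemma cliqueK_of (G : SimpleGraph (Fin 9)) (cl : Fin 9 → Finset (Fin 9))
    (h : ∀ i, G.IsNClique 4 (cl i) ∧ ∀ v ∈ cl i, v ≠ i) : CliqueInEveryK G 8 4 := by
  intro s hs
  have hcompl : (Finset.univ \ s).card = 1 := by
    rw [Finset.card_sdiff_of_subset (Finset.subset_univ s)]
    simp [hs]
  obtain ⟨i, hi⟩ := Finset.card_eq_one.mp hcompl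
  have hms : ∀ v : Fin 9, v ≠ i → v ∈ s := by
    intro v hv
    by_contra hc
    have hm : v ∈ Finset.univ \ s := Finset.mem_sdiff.mpr ⟨Finset.mem_univ _, hc⟩
    rw [hi] at hm
    exact hv (Finset.mem_singleton.mp hm)
  exact ⟨cl i, fun v hv => hms v ((h i).2 v hv), (h i).1⟩

lemma cliqueK_twoK2plusK5 : CliqueInEveryK twoK2plusK5 8 4 :=
  cliqueK_of _ (fun i => if (i : ℕ) ≤ 3 then {5, 6, 7, 8} else Finset.erase {4, 5, 6, 7, 8} i)
    (by decide)

lemma cliqueK_K1plus2K4 : CliqueInEveryK K1plus2K4 8 4 :=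
  cliqueK_of _ (fun i => if 5 ≤ (i : ℕ) then {1, 2, 3, 4} else {5, 6, 7, 8})
    (by decide)

lemma indepNum_twoK2plusK5 : _root_.indepNum twoK2plusK5 = 3 :=
  indepNum_eq_three' _ ⟨{0, 2, 4}, by decide⟩ (by decide)

lemma indepNum_K1plus2K4 : _root_.indepNum K1plus2K4 = 3 :=
  indepNum_eq_three' _ ⟨{0, 1, 5}, by decide⟩ (by decide)

lemma noniso : IsEmpty (twoK2plusK5 ≃g K1plus2K4) := by
  constructor
  intro f
  have h1 : ∀ v : Fin 9, ∃ w, twoK2plusK5.Adj v w := by decide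
  have h2 : ∀ w : Fin 9, ¬ K1plus2K4.Adj 0 w := by decide
  obtain ⟨w, hw⟩ := h1 (f.symm 0)
  have h := f.map_adj_iff.mpr hw
  rw [RelIso.apply_symm_apply] at h
  exact h2 _ h


/-- `2K₂ + K₅` and `K₁ + 2K₄` are both minimum `(9,8,4,3)`-graphs, and they are
non-isomorphic; in particular minimum `(n,k,t,r)`-graphs need not be unique. -/
theorem stmt_18 :
    CliqueInEveryK twoK2plusK5 8 4 ∧ CliqueInEveryK K1plus2K4 8 4 ∧
    _root_.indepNum twoK2plusK5 = 3 ∧ _root_.indepNum K1plus2K4 = 3 ∧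
    (∀ G : SimpleGraph (Fin 9), CliqueInEveryK G 8 4 → _root_.indepNum G = 3 →
      edgeCount twoK2plusK5 ≤ edgeCount G ∧ edgeCount K1plus2K4 ≤ edgeCount G) ∧
    IsEmpty (twoK2plusK5 ≃g K1plus2K4) := by
  refine ⟨cliqueK_twoK2plusK5, cliqueK_K1plus2K4, indepNum_twoK2plusK5, indepNum_K1plus2K4,
    ?_, noniso⟩
  intro G hKG hIG
  have h12 := main_bound G hKG hIG
  rw [edgeCount_twoK2plusK5, edgeCount_K1plus2K4]
  exact ⟨h12, h12⟩
end
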